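/- arXiv:1411.5223 — 3 statements merged into one kernel-verified Lean document; each statement's English description precedes it below -/
import Mathlib

section
/- For all nonnegative integers m ≥ 1, n and complex z₁, z₂ with 0 < q < 1: H_{m,n}(q z₁, z₂ | q) = H_{m,n}(z₁, z₂ | q) - z₁ (1 - q^m) H_{m-1,n}(z₁, z₂ | q). -/
open Finset Filter

noncomputable def qPoch (a q : ℂ) (n : ℕ) : ℂ :=
  ∏ j ∈ Finset.range n, (1 - a * q ^ j)

noncomputable def qbinom (q : ℂ) : ℕ → ℕ → ℂ
  | _, 0 => 1
  | 0, _ + 1 => 0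
  | m + 1, k + 1 => qbinom q m k + q ^ (k + 1) * qbinom q m (k + 1)

/-- The first q-analogue of the 2D Hermite polynomials. -/
noncomputable def H2D (q z1 z2 : ℂ) (m n : ℕ) : ℂ :=
  ∑ k ∈ Finset.range (min m n + 1),
    qbinom q m k * qbinom q n k * (-1) ^ k * q ^ (k.choose 2) * qPoch q q k *
      z1 ^ (m - k) * z2 ^ (n - k)

/-- The second q-analogue of the 2D Hermite polynomials. -/
noncomputable def h2D (q z1 z2 : ℂ) (m n : ℕ) : ℂ :=
  ∑ j ∈ Finset.range (min m n + 1),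
    qbinom q m j * qbinom q n j * q ^ ((m - j) * (n - j)) * (-1) ^ j * qPoch q q j *
      z1 ^ (m - j) * z2 ^ (n - j)

/-- The q-2D ultraspherical (q-disk / q-Zernike) polynomials. -/
noncomputable def p2D (q b z1 z2 : ℂ) (m n : ℕ) : ℂ :=
  ∑ k ∈ Finset.range (min m n + 1),
    qbinom q m k * qbinom q n k * (-1) ^ k * q ^ (k.choose 2) * qPoch q q k *
      qPoch (b * q) q (m + n - k) * z1 ^ (m - k) * z2 ^ (n - k)

/-- The infinite q-Pochhammer product (a;q)_∞. -/
noncomputable def qPochInf (a q : ℂ) : ℂ :=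
  ∏' j : ℕ, (1 - a * q ^ j)

/-!
Comparing the defining q-Pascal rule `[m+1, k+1] = [m, k] + q^(k+1) [m, k+1]` with its mirror
`[m+1, k+1] = q^(m-k) [m, k] + [m, k+1]` gives the absorption identity
`q^(m+1-k) [m+1, k] = [m+1, k] - (1 - q^(m+1)) [m, k]`, which is the recurrence coefficient by
coefficient.
-/

lemma qbinom_eq_zero_of_lt (q : ℂ) {m k : ℕ} (h : m < k) : qbinom q m k = 0 := by
  induction m generalizing k with
  | zero => obtain ⟨k, rfl⟩ := Nat.exists_eq_succ_of_ne_zero (by omega : k ≠ 0); rfl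
  | succ m ih =>
    obtain ⟨k, rfl⟩ := Nat.exists_eq_succ_of_ne_zero (by omega : k ≠ 0)
    rw [qbinom, ih (by omega), ih (by omega), mul_zero, add_zero]

lemma qbinom_self (q : ℂ) (m : ℕ) : qbinom q m m = 1 := by
  induction m with
  | zero => rfl
  | succ m ih => rw [qbinom, ih, qbinom_eq_zero_of_lt q (Nat.lt_succ_self m), mul_zero, add_zero]

lemma qbinom_succ_succ' (q : ℂ) (m k : ℕ) :
    qbinom q (m + 1) (k + 1) = q ^ (m - k) * qbinom q m k + qbinom q m (k + 1) := by
  induction m generalizing k with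
  | zero => cases k <;> simp [qbinom]
  | succ m ih =>
    rcases k with _ | j
    · have h0 := ih 0
      simp only [qbinom, Nat.sub_zero, zero_add, pow_one, mul_one] at h0 ⊢
      linear_combination q * h0
    · rcases lt_or_ge j m with hj | hj
      · obtain ⟨d, rfl⟩ := Nat.exists_eq_add_of_lt hj
        have h1 := ih j
        have h2 := ih (j + 1)
        rw [show j + d + 1 - j = d + 1 by omega] at h1
        rw [show j + d + 1 - (j + 1) = d by omega] at h2
        rw [show j + d + 1 + 1 - (j + 1) = d + 1 by omega]
        -- each of `h1`, `h2` says `(1 - q ^ (m - k)) * [m, k] = (1 - q ^ (k + 1)) * [m, k + 1]`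
        simp only [qbinom] at h1 h2 ⊢
        linear_combination h1 + q ^ (j + 2) * h2
      · rcases hj.eq_or_lt with rfl | hlt
        · simp [qbinom_self, qbinom_eq_zero_of_lt]
        · rw [qbinom_eq_zero_of_lt q (show m + 1 + 1 < j + 1 + 1 by omega),
            qbinom_eq_zero_of_lt q (show m + 1 < j + 1 by omega),
            qbinom_eq_zero_of_lt q (show m + 1 < j + 1 + 1 by omega)]
          ring

lemma pow_mul_qbinom_succ (q : ℂ) (m k : ℕ) :
    q ^ (m + 1 - k) * qbinom q (m + 1) k = qbinom q (m + 1) k - (1 - q ^ (m + 1)) * qbinom q m k := by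
  rcases le_or_gt k m with hk | hk
  · obtain ⟨d, rfl⟩ := Nat.exists_eq_add_of_le hk
    rw [show k + d + 1 - k = d + 1 by omega]
    rcases k with _ | j
    · simp [qbinom]
    · have hpascal := qbinom_succ_succ' q (j + d + 1) j
      rw [show j + d + 1 - j = d + 1 by omega] at hpascal
      rw [show j + 1 + d + 1 = j + d + 1 + 1 by omega, show j + 1 + d = j + d + 1 by omega]
      rw [qbinom] at hpascal ⊢
      linear_combination -hpascal
  · rcases (Nat.succ_le_of_lt hk).eq_or_lt with rfl | hlt
    · simp [qbinom_self, qbinom_eq_zero_of_lt]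
    · rw [qbinom_eq_zero_of_lt q (show m + 1 < k by omega), qbinom_eq_zero_of_lt q hk]
      ring

lemma qbinom_succ_mul_mul_pow (q z : ℂ) (m k : ℕ) :
    qbinom q (m + 1) k * (q * z) ^ (m + 1 - k) =
      qbinom q (m + 1) k * z ^ (m + 1 - k) - z * (1 - q ^ (m + 1)) * (qbinom q m k * z ^ (m - k)) := by
  rcases le_or_gt k m with hk | hk
  · have hz : z ^ (m + 1 - k) = z * z ^ (m - k) := by
      rw [← pow_succ', show m - k + 1 = m + 1 - k by omega]
    rw [mul_pow]
    linear_combination z ^ (m + 1 - k) * pow_mul_qbinom_succ q m k -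
      (1 - q ^ (m + 1)) * qbinom q m k * hz
  · rw [qbinom_eq_zero_of_lt q hk, show m + 1 - k = 0 by omega]
    ring

theorem stmt1_general (m n : ℕ) (z1 z2 : ℂ) (q : ℝ) :
    H2D (q : ℂ) ((q : ℂ) * z1) z2 m n =
      H2D (q : ℂ) z1 z2 m n - z1 * (1 - (q : ℂ) ^ m) * H2D (q : ℂ) z1 z2 (m - 1) n := by
  rcases m with _ | m
  · simp [H2D]
  have hrange : range (min m n + 1) ⊆ range (min (m + 1) n + 1) :=
    range_subset_range.mpr (by omega)
  have hvanish : ∀ k ∈ range (min (m + 1) n + 1), k ∉ range (min m n + 1) →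
      qbinom (q : ℂ) m k * qbinom (q : ℂ) n k * (-1) ^ k * (q : ℂ) ^ k.choose 2 *
        qPoch (q : ℂ) (q : ℂ) k * z1 ^ (m - k) * z2 ^ (n - k) = 0 := by
    intro k hk hk'
    simp only [mem_range] at hk hk'
    rw [qbinom_eq_zero_of_lt (q : ℂ) (by omega)]
    ring
  simp only [H2D, Nat.add_sub_cancel]
  rw [sum_subset hrange hvanish, mul_sum, ← sum_sub_distrib]
  refine sum_congr rfl fun k _ => ?_
  linear_combination qbinom (q : ℂ) n k * (-1) ^ k * (q : ℂ) ^ k.choose 2 *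
    qPoch (q : ℂ) (q : ℂ) k * z2 ^ (n - k) * qbinom_succ_mul_mul_pow (q : ℂ) z1 m k

theorem stmt1 (m n : ℕ) (hm : 1 ≤ m) (z1 z2 : ℂ) (q : ℝ) (hq0 : 0 < q) (hq1 : q < 1) :
    H2D (q : ℂ) ((q : ℂ) * z1) z2 m n =
      H2D (q : ℂ) z1 z2 m n - z1 * (1 - (q : ℂ) ^ m) * H2D (q : ℂ) z1 z2 (m - 1) n :=
  stmt1_general m n z1 z2 q
end

section
/- For all nonnegative integers m, n ≥ 1 and complex z₁, z₂ with q ≠ 0: q^{-m} H_{m,n}(q z₁, z₂ | q) = H_{m,n}(z₁, z₂ | q) - q^{-1} (1-q^m)(1-q^n) H_{m-1,n-1}(z₁, z₂ | q). -/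
open Finset Filter

/-! Replacing `z1` by `q * z1` multiplies the `k`-th term of `H2D q z1 z2 m n` by `q ^ (m - k)`,
so `H_{m,n}(z1, z2) - q⁻ᵐ H_{m,n}(q z1, z2)` is the sum of the terms weighted by `1 - q⁻ᵏ`.
The `k = 0` term vanishes; for `k ≥ 1` the absorption identity
`(1 - q ^ k) [m choose k]_q = (1 - q ^ m) [m - 1 choose k - 1]_q`, applied to both q-binomials,
and `(q; q)_k = (q; q)_{k-1} (1 - q ^ k)` turn the `k`-th term into
`q⁻¹ (1 - q ^ m) (1 - q ^ n)` times the `(k - 1)`-th term of `H_{m-1,n-1}(z1, z2)`. -/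
noncomputable def H2DCoeff (q : ℂ) (m n k : ℕ) : ℂ :=
  qbinom q m k * qbinom q n k * (-1) ^ k * q ^ (k.choose 2) * qPoch q q k

lemma H2D_eq_sum_H2DCoeff (q z1 z2 : ℂ) (m n : ℕ) :
    H2D q z1 z2 m n =
      ∑ k ∈ range (min m n + 1), H2DCoeff q m n k * z1 ^ (m - k) * z2 ^ (n - k) :=
  rfl

lemma qPoch_succ (a q : ℂ) (n : ℕ) : qPoch a q (n + 1) = qPoch a q n * (1 - a * q ^ n) :=
  prod_range_succ _ _

lemma one_sub_pow_mul_qbinom_succ_succ (q : ℂ) (m k : ℕ) :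
    (1 - q ^ (k + 1)) * qbinom q (m + 1) (k + 1) = (1 - q ^ (m + 1)) * qbinom q m k := by
  induction m generalizing k with
  | zero => cases k <;> simp [qbinom]
  | succ m ih =>
    cases k with
    | zero =>
      have h := ih 0
      simp only [qbinom] at h ⊢
      linear_combination q * h
    | succ k =>
      have h1 := ih k
      have h2 := ih (k + 1)
      simp only [qbinom] at h1 h2 ⊢
      linear_combination q * h1 + q ^ (k + 2) * h2

lemma one_sub_pow_mul_H2DCoeff_succ (q : ℂ) (m n k : ℕ) :
    (1 - q ^ (k + 1)) * H2DCoeff q (m + 1) (n + 1) (k + 1) =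
      -q ^ k * (1 - q ^ (m + 1)) * (1 - q ^ (n + 1)) * H2DCoeff q m n k := by
  have hm := one_sub_pow_mul_qbinom_succ_succ q m k
  have hn := one_sub_pow_mul_qbinom_succ_succ q n k
  have hchoose : (k + 1).choose 2 = k.choose 2 + k := by
    rw [Nat.choose_succ_succ', Nat.choose_one_right, add_comm]
  simp only [H2DCoeff, qPoch_succ, hchoose, pow_add, pow_succ]
  linear_combination -(-1) ^ k * q ^ k.choose 2 * q ^ k * qPoch q q k *
    ((1 - q ^ (k + 1)) * qbinom q (n + 1) (k + 1) * hm + (1 - q ^ (m + 1)) * qbinom q m k * hn)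

lemma H2D_sub_inv_pow_mul_H2D_mul_left {q : ℂ} (hq : q ≠ 0) (z1 z2 : ℂ) (m n : ℕ) :
    H2D q z1 z2 m n - (q ^ m)⁻¹ * H2D q (q * z1) z2 m n =
      ∑ k ∈ range (min m n + 1),
        (1 - (q ^ k)⁻¹) * H2DCoeff q m n k * z1 ^ (m - k) * z2 ^ (n - k) := by
  rw [H2D_eq_sum_H2DCoeff, H2D_eq_sum_H2DCoeff, mul_sum, ← sum_sub_distrib]
  refine sum_congr rfl fun k hk => ?_
  have hqm : q ^ m = q ^ k * q ^ (m - k) := by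
    rw [← pow_add, Nat.add_sub_cancel' (by simp at hk; omega)]
  rw [hqm, mul_pow]
  field_simp

lemma H2D_sub_inv_pow_mul_H2D_mul_left_succ {q : ℂ} (hq : q ≠ 0) (z1 z2 : ℂ) (m n : ℕ) :
    H2D q z1 z2 (m + 1) (n + 1) - (q ^ (m + 1))⁻¹ * H2D q (q * z1) z2 (m + 1) (n + 1) =
      q⁻¹ * (1 - q ^ (m + 1)) * (1 - q ^ (n + 1)) * H2D q z1 z2 m n := by
  rw [H2D_sub_inv_pow_mul_H2D_mul_left hq, Nat.succ_min_succ, sum_range_succ',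
    H2D_eq_sum_H2DCoeff, mul_sum]
  simp only [pow_zero, inv_one, sub_self, zero_mul, add_zero, Nat.add_sub_add_right]
  refine sum_congr rfl fun k _ => ?_
  have hcoeff := one_sub_pow_mul_H2DCoeff_succ q m n k
  rw [pow_succ] at hcoeff ⊢
  field_simp
  linear_combination -(z1 ^ (m - k) * z2 ^ (n - k) * hcoeff)

theorem stmt2_general (m n : ℕ) (z1 z2 q : ℂ) (hq : q ≠ 0) :
    (q ^ m)⁻¹ * H2D q (q * z1) z2 m n =
      H2D q z1 z2 m n - q⁻¹ * (1 - q ^ m) * (1 - q ^ n) * H2D q z1 z2 (m - 1) (n - 1) := by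
  rcases m with _ | m
  · simp [H2D]
  rcases n with _ | n
  · simp [H2D, qbinom, qPoch, mul_pow, hq]
  simp only [Nat.add_sub_cancel]
  linear_combination -(H2D_sub_inv_pow_mul_H2D_mul_left_succ hq z1 z2 m n)

theorem stmt2 (m n : ℕ) (hm : 1 ≤ m) (hn : 1 ≤ n) (z1 z2 q : ℂ) (hq : q ≠ 0) :
    (q ^ m)⁻¹ * H2D q (q * z1) z2 m n =
      H2D q z1 z2 m n - q⁻¹ * (1 - q ^ m) * (1 - q ^ n) * H2D q z1 z2 (m - 1) (n - 1) :=
  stmt2_general m n z1 z2 q hq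
end

section
/- For all nonnegative integers m, n with m,n ≥ 1 and complex z₁, z₂, q with q ≠ 0: q^{-m} H_{m,n}(q z₁, z₂ | q) = q^{-n} H_{m,n}(z₁, q z₂ | q). -/
open Finset Filter

theorem inv_pow_mul_mul_pow_sub {K : Type*} [Field K] {q : K} (hq : q ≠ 0) (z : K) {k m : ℕ}
    (hk : k ≤ m) : (q ^ m)⁻¹ * (q * z) ^ (m - k) = (q ^ k)⁻¹ * z ^ (m - k) := by
  obtain ⟨j, rfl⟩ := Nat.exists_eq_add_of_le hk
  rw [Nat.add_sub_cancel_left, mul_pow, pow_add]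
  field_simp

theorem stmt3_general (m n : ℕ) (z1 z2 q : ℂ) (hq : q ≠ 0) :
    (q ^ m)⁻¹ * H2D q (q * z1) z2 m n = (q ^ n)⁻¹ * H2D q z1 (q * z2) m n := by
  unfold H2D
  rw [mul_sum, mul_sum]
  refine sum_congr rfl fun k hk => ?_
  have hk : k ≤ min m n := Nat.lt_succ_iff.mp (mem_range.mp hk)
  -- both k-th summands are q^(-k) times the k-th summand of `H2D q z1 z2 m n`
  have hz1 := inv_pow_mul_mul_pow_sub hq z1 (hk.trans (min_le_left m n))
  have hz2 := inv_pow_mul_mul_pow_sub hq z2 (hk.trans (min_le_right m n))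
  generalize qbinom q m k * qbinom q n k * (-1) ^ k * q ^ k.choose 2 * qPoch q q k = c
  linear_combination c * z2 ^ (n - k) * hz1 - c * z1 ^ (m - k) * hz2

theorem stmt3 (m n : ℕ) (hm : 1 ≤ m) (hn : 1 ≤ n) (z1 z2 q : ℂ) (hq : q ≠ 0) :
    (q ^ m)⁻¹ * H2D q (q * z1) z2 m n = (q ^ n)⁻¹ * H2D q z1 (q * z2) m n :=
  stmt3_general m n z1 z2 q hq
end
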